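/- arXiv:2601.22100 — 3 statements merged into one kernel-verified Lean document; each statement's English description precedes it below -/
import Mathlib

section
/- For an integrable real-valued random variable X and α ∈ (0,1), the function y ↦ y − (1/α)·E[max(y − X, 0)] attains its maximum over ℝ at any α-quantile y* of X, and the maximum value equals (1/α)∫₀^α VaR_β[X] dβ (the CVaR variational representation of Rockafellar–Uryasev). -/
/-! With `φ y = E[(y - X)⁺]`, the pointwise bound `(c - x)⁺ + (y - c)·1_A(x) ≤ (y - x)⁺`, valid for
any `A` between `{x < c}` and `{x ≤ c}`, makes both `P[X < c]` and `P[X ≤ c]` subgradients of the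
convex function `φ` at `c`. At an `α`-quantile they bracket `α`, so `y - φ y / α` is maximal there.

For the value, the layer-cake formula writes both `E[(y* - X)⁺]` and `∫₀^α (y* - VaR_β) dβ` as
`∫_{s < y*} F s ds`, `F` the CDF of `X`: for `s < y*` we have `F s ≤ P[X < y*] ≤ α`, and the
Galois connection `VaR_β ≤ s ↔ β ≤ F s` turns `{β ∈ (0, α] | VaR_β ≤ s}` into `(0, F s]`. -/

open MeasureTheory Set

/-- Lower `α`-quantile (Value-at-Risk) of a random variable `X` under measure `μ`:
the generalized inverse of the CDF. -/
noncomputable def VaR {Ω : Type*} [MeasurableSpace Ω] (μ : Measure Ω)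
    (X : Ω → ℝ) (β : ℝ) : ℝ :=
  sInf {x : ℝ | β ≤ (μ {ω | X ω ≤ x}).toReal}

open ProbabilityTheory

theorem lintegral_ofReal_sub_eq_setLIntegral_measure_le {α : Type*} [MeasurableSpace α]
    {ν : Measure α} {g : α → ℝ} (hg : AEMeasurable g ν) (c : ℝ) :
    ∫⁻ a, ENNReal.ofReal (c - g a) ∂ν = ∫⁻ s in Iio c, ν {a | g a ≤ s} := by
  have hpos : ∀ a, ENNReal.ofReal (c - g a) = ENNReal.ofReal (max (c - g a) 0) := fun a => by
    simp [ENNReal.ofReal_max]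
  rw [lintegral_congr hpos, lintegral_eq_lintegral_meas_le ν (f := fun a => max (c - g a) 0)
    (.of_forall fun a => le_max_right _ _) (by fun_prop)]
  have hsub := (Measure.measurePreserving_sub_left volume c).setLIntegral_comp_preimage_emb
    (MeasurableEquiv.subLeft c).measurableEmbedding (fun s => ν {a | g a ≤ s}) (Iio c)
  rw [show (fun t => c - t) ⁻¹' Iio c = Ioi 0 by ext t; simp] at hsub
  rw [← hsub]
  refine setLIntegral_congr_fun measurableSet_Ioi fun t (ht : 0 < t) => ?_
  congr 1
  ext a
  simp only [mem_ofPred_eq, le_max_iff, not_le.2 ht, or_false]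
  constructor <;> intro h <;> linarith

theorem StieltjesFunction.csInf_le_iff {R : Type*} [ConditionallyCompleteLinearOrder R]
    [TopologicalSpace R] [OrderTopology R] [DenselyOrdered R] [NoMaxOrder R]
    (F : StieltjesFunction R) {β : ℝ} {s : R} (hne : ∃ x, β ≤ F x) (hlt : ∃ x, F x < β) :
    sInf {x | β ≤ F x} ≤ s ↔ β ≤ F s := by
  obtain ⟨x₀, hx₀⟩ := hlt
  have hbdd : BddBelow {x | β ≤ F x} := ⟨x₀, fun x hx => by
    by_contra! h; exact (hx.trans (F.mono h.le)).not_gt hx₀⟩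
  refine ⟨fun h => ?_, fun h => csInf_le hbdd h⟩
  have hmem : β ≤ F (sInf {x | β ≤ F x}) := by
    refine ge_of_tendsto ((F.right_continuous _).mono Ioi_subset_Ici_self).tendsto ?_
    filter_upwards [self_mem_nhdsWithin] with x hx
    obtain ⟨y, hy, hyx⟩ := exists_lt_of_csInf_lt hne hx
    exact le_trans hy (F.mono hyx.le)
  exact hmem.trans (F.mono h)

section

variable {Ω : Type*} [MeasurableSpace Ω] {μ : Measure Ω} [IsProbabilityMeasure μ] {X : Ω → ℝ}

theorem cdf_map_eq_measureReal (hX : Measurable X) (x : ℝ) :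
    cdf (μ.map X) x = μ.real {ω | X ω ≤ x} := by
  have := Measure.isProbabilityMeasure_map (μ := μ) hX.aemeasurable
  rw [cdf_eq_real, map_measureReal_apply hX measurableSet_Iic]
  rfl

theorem VaR_le_iff (hX : Measurable X) {β : ℝ} (hβ : β ∈ Ioo 0 1) (s : ℝ) :
    VaR μ X β ≤ s ↔ β ≤ μ.real {ω | X ω ≤ s} := by
  have hcdf := cdf_map_eq_measureReal (μ := μ) hX
  simp only [VaR, ← measureReal_def, ← hcdf]
  exact (cdf (μ.map X)).csInf_le_iff
    (((tendsto_cdf_atTop _).eventually (eventually_gt_nhds hβ.2)).exists.imp fun _ => le_of_lt)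
    ((tendsto_cdf_atBot _).eventually (eventually_lt_nhds hβ.1)).exists

theorem monotoneOn_VaR (hX : Measurable X) : MonotoneOn (VaR μ X) (Ioo 0 1) :=
  fun _ hβ _ hβ' hββ' =>
    (VaR_le_iff hX hβ _).2 (hββ'.trans ((VaR_le_iff hX hβ' _).1 le_rfl))

theorem measureReal_lt_le_of_one_sub_le (hX : Measurable X) {α c : ℝ}
    (hc : 1 - α ≤ μ.real {ω | c ≤ X ω}) : μ.real {ω | X ω < c} ≤ α := by
  have hcompl : {ω | X ω < c} = {ω | c ≤ X ω}ᶜ := by ext; simp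
  rw [hcompl, probReal_compl_eq_one_sub (measurableSet_le measurable_const hX)]
  linarith

theorem aemeasurable_VaR (hX : Measurable X) {α : ℝ} (hα : α < 1) :
    AEMeasurable (VaR μ X) (volume.restrict (Ioc 0 α)) :=
  aemeasurable_restrict_of_monotoneOn measurableSet_Ioc
    ((monotoneOn_VaR hX).mono fun _ hβ => ⟨hβ.1, hβ.2.trans_lt hα⟩)

theorem lintegral_ofReal_sub_VaR (hX : Measurable X) {α c : ℝ} (hα : α < 1)
    (hF : ∀ s < c, μ.real {ω | X ω ≤ s} ≤ α) :
    ∫⁻ β in Ioc 0 α, ENNReal.ofReal (c - VaR μ X β) = ∫⁻ ω, ENNReal.ofReal (c - X ω) ∂μ := by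
  rw [lintegral_ofReal_sub_eq_setLIntegral_measure_le (aemeasurable_VaR hX hα) c,
    lintegral_ofReal_sub_eq_setLIntegral_measure_le hX.aemeasurable c]
  refine setLIntegral_congr_fun measurableSet_Iio fun s (hs : s < c) => ?_
  have hlevel : {β | VaR μ X β ≤ s} ∩ Ioc 0 α = Ioc 0 (μ.real {ω | X ω ≤ s}) := by
    ext β
    simp only [mem_inter_iff, mem_ofPred_eq, mem_Ioc]
    constructor
    · rintro ⟨hle, hβ0, hβα⟩
      exact ⟨hβ0, (VaR_le_iff hX ⟨hβ0, hβα.trans_lt hα⟩ s).1 hle⟩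
    · rintro ⟨hβ0, hβF⟩
      have hβα := hβF.trans (hF s hs)
      exact ⟨(VaR_le_iff hX ⟨hβ0, hβα.trans_lt hα⟩ s).2 hβF, hβ0, hβα⟩
  rw [Measure.restrict_apply' measurableSet_Ioc, hlevel, Real.volume_Ioc, sub_zero,
    ofReal_measureReal]

theorem integral_posPart_sub_add_mul_le (hXint : Integrable X μ)
    {A : Set Ω} {c : ℝ} (hA : MeasurableSet A) (hlt : {ω | X ω < c} ⊆ A)
    (hle : A ⊆ {ω | X ω ≤ c}) (y : ℝ) :
    ∫ ω, max (c - X ω) 0 ∂μ + (y - c) * μ.real A ≤ ∫ ω, max (y - X ω) 0 ∂μ := by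
  have hpt : ∀ ω, max (c - X ω) 0 + A.indicator (fun _ => y - c) ω ≤ max (y - X ω) 0 := by
    intro ω
    by_cases hω : ω ∈ A
    · have : X ω ≤ c := hle hω
      rw [indicator_of_mem hω, max_eq_left (by linarith)]
      linarith [le_max_left (y - X ω) 0]
    · have : c ≤ X ω := not_lt.1 fun h => hω (hlt h)
      rw [indicator_of_notMem hω, max_eq_right (by linarith)]
      simp
  have hint : ∀ y : ℝ, Integrable (fun ω => max (y - X ω) 0) μ := fun y =>
    ((integrable_const y).sub hXint).sup (integrable_const 0)
  have hind : Integrable (A.indicator fun _ => y - c) μ := (integrable_const _).indicator hA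
  calc ∫ ω, max (c - X ω) 0 ∂μ + (y - c) * μ.real A
      = ∫ ω, (max (c - X ω) 0 + A.indicator (fun _ => y - c) ω) ∂μ := by
        rw [integral_add (hint c) hind, integral_indicator_const _ hA, smul_eq_mul, mul_comm]
    _ ≤ ∫ ω, max (y - X ω) 0 ∂μ := integral_mono ((hint c).add hind) (hint y) hpt

theorem sub_integral_posPart_le_of_isQuantile (hX : Measurable X) (hXint : Integrable X μ)
    {α c : ℝ} (hα : 0 < α) (hc₁ : α ≤ μ.real {ω | X ω ≤ c})
    (hc₂ : 1 - α ≤ μ.real {ω | c ≤ X ω}) (y : ℝ) :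
    y - (1 / α) * ∫ ω, max (y - X ω) 0 ∂μ ≤ c - (1 / α) * ∫ ω, max (c - X ω) 0 ∂μ := by
  suffices α * (y - c) ≤ ∫ ω, max (y - X ω) 0 ∂μ - ∫ ω, max (c - X ω) 0 ∂μ by
    field_simp
    linarith
  rcases le_total c y with hcy | hyc
  · have := integral_posPart_sub_add_mul_le hXint (measurableSet_le hX measurable_const)
      (fun ω (h : X ω < c) => h.le) subset_rfl y
    linarith [mul_le_mul_of_nonneg_left hc₁ (sub_nonneg.2 hcy)]
  · have := integral_posPart_sub_add_mul_le hXint (measurableSet_lt hX measurable_const)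
      subset_rfl (fun ω (h : X ω < c) => h.le) y
    linarith [mul_le_mul_of_nonpos_left (measureReal_lt_le_of_one_sub_le hX hc₂)
      (sub_nonpos.2 hyc)]

theorem intervalIntegral_VaR_eq (hX : Measurable X) (hXint : Integrable X μ) {α c : ℝ}
    (hα : α ∈ Ioo 0 1) (hc₁ : α ≤ μ.real {ω | X ω ≤ c})
    (hc₂ : 1 - α ≤ μ.real {ω | c ≤ X ω}) :
    ∫ β in 0..α, VaR μ X β = α * c - ∫ ω, max (c - X ω) 0 ∂μ := by
  have hF : ∀ s < c, μ.real {ω | X ω ≤ s} ≤ α := fun s hs =>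
    (measureReal_mono fun ω (h : X ω ≤ s) => h.trans_lt hs).trans
      (measureReal_lt_le_of_one_sub_le hX hc₂)
  have hlin := lintegral_ofReal_sub_VaR hX hα.2 hF
  have hmeas : AEStronglyMeasurable (fun β => c - VaR μ X β) (volume.restrict (Ioc 0 α)) :=
    (aemeasurable_const.sub (aemeasurable_VaR hX hα.2)).aestronglyMeasurable
  have hnonneg : 0 ≤ᵐ[volume.restrict (Ioc 0 α)] fun β => c - VaR μ X β :=
    (ae_restrict_iff' measurableSet_Ioc).2 <| .of_forall fun β hβ => sub_nonneg.2 <|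
      (VaR_le_iff hX ⟨hβ.1, hβ.2.trans_lt hα.2⟩ c).2 (hβ.2.trans hc₁)
  have hint : IntegrableOn (fun β => c - VaR μ X β) (Ioc 0 α) := by
    refine ⟨hmeas, ?_⟩
    rw [hasFiniteIntegral_iff_ofReal hnonneg, hlin]
    exact ((integrable_const c).sub hXint).lintegral_lt_top
  have hval : ∫ β in Ioc 0 α, (c - VaR μ X β) = ∫ ω, max (c - X ω) 0 ∂μ := by
    rw [integral_eq_lintegral_of_nonneg_ae hnonneg hmeas, hlin,
      integral_eq_lintegral_of_nonneg_ae (f := fun ω => max (c - X ω) 0)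
        (.of_forall fun _ => le_max_right _ _) (by fun_prop)]
    simp [ENNReal.ofReal_max]
  calc ∫ β in 0..α, VaR μ X β = ∫ β in Ioc 0 α, (c - (c - VaR μ X β)) := by
        simp [intervalIntegral.integral_of_le hα.1.le]
    _ = α * c - ∫ ω, max (c - X ω) 0 ∂μ := by
        rw [integral_sub (integrable_const c) hint, hval, setIntegral_const]
        simp [hα.1.le]

end

/-- Rockafellar–Uryasev variational representation of CVaR.
For an integrable random variable `X` and `α ∈ (0,1)`, the function
`y ↦ y − (1/α)·E[(y − X)⁺]` attains its maximum over `ℝ` at any `α`-quantile `y*`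
of `X`, and the maximum value equals `(1/α)∫₀^α VaR_β[X] dβ`. -/
theorem cvar_variational_representation
    {Ω : Type*} [MeasurableSpace Ω] (μ : Measure Ω) [IsProbabilityMeasure μ]
    (X : Ω → ℝ) (hX : Measurable X) (hXint : Integrable X μ)
    (α : ℝ) (hα : α ∈ Set.Ioo (0:ℝ) 1) (ystar : ℝ)
    (hq1 : α ≤ (μ {ω | X ω ≤ ystar}).toReal)
    (hq2 : 1 - α ≤ (μ {ω | ystar ≤ X ω}).toReal) :
    (∀ y : ℝ, y - (1 / α) * ∫ ω, max (y - X ω) 0 ∂μ ≤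
        ystar - (1 / α) * ∫ ω, max (ystar - X ω) 0 ∂μ) ∧
    ystar - (1 / α) * ∫ ω, max (ystar - X ω) 0 ∂μ =
        (1 / α) * ∫ β in (0:ℝ)..α, VaR μ X β := by
  refine ⟨sub_integral_posPart_le_of_isQuantile hX hXint hα.1 hq1 hq2, ?_⟩
  rw [intervalIntegral_VaR_eq hX hXint hα hq1 hq2]
  field_simp [hα.1.ne']
end

section
/- The soft pinball loss l_α^κ defined piecewise by l_α^κ(δ) = ((1−α)κ/2)((δ+κ)² − 2δ/κ − 1) for δ < −κ, (1−α)δ²/(2κ) for δ ∈ [−κ,0), αδ²/(2κ) for δ ∈ [0,κ), and (ακ/2)((δ−κ)² + 2δ/κ − 1) for δ ≥ κ, is continuously differentiable on ℝ with derivative equal to ∂l_α^κ as defined in the paper, and is convex. -/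
/-!
On each of `(-∞, -κ)`, `[-κ, 0)`, `[0, κ)`, `[κ, ∞)` the loss is a quadratic, and adjacent
quadratics agree in value and slope at the breakpoints, so gluing them gives a differentiable
function whose derivative is the (continuous) glued derivative. That derivative is affine with
nonnegative slope on each piece and continuous, hence nondecreasing, so the loss is convex.
-/

open Set

/-- The soft pinball loss `l_α^κ`. -/
noncomputable def softPinball (α κ δ : ℝ) : ℝ :=
  if δ < -κ then (1 - α) * κ / 2 * ((δ + κ) ^ 2 - 2 * δ / κ - 1)
  else if δ < 0 then (1 - α) * δ ^ 2 / (2 * κ)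
  else if δ < κ then α * δ ^ 2 / (2 * κ)
  else α * κ / 2 * ((δ - κ) ^ 2 + 2 * δ / κ - 1)

/-- The soft pinball loss derivative `∂l_α^κ`. -/
noncomputable def softPinballDeriv (α κ δ : ℝ) : ℝ :=
  if δ < -κ then (1 - α) * (κ * δ + κ ^ 2 - 1)
  else if δ < 0 then (1 - α) / κ * δ
  else if δ < κ then α / κ * δ
  else α * (κ * δ - κ ^ 2 + 1)

theorem hasDerivAt_ite_lt {F : Type*} [NormedAddCommGroup F] [NormedSpace ℝ F]
    {f g f' g' : ℝ → F} {a : ℝ} (hf : ∀ x, HasDerivAt f (f' x) x)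
    (hg : ∀ x, HasDerivAt g (g' x) x) (hfg : f a = g a) (hfg' : f' a = g' a) (x : ℝ) :
    HasDerivAt (fun x => if x < a then f x else g x) (if x < a then f' x else g' x) x := by
  rcases lt_trichotomy x a with hx | rfl | hx
  · rw [if_pos hx]
    refine (hf x).congr_of_eventuallyEq ?_
    filter_upwards [Iio_mem_nhds hx] with y hy using if_pos hy
  · rw [if_neg (lt_irrefl x)]
    have hleft : HasDerivWithinAt (fun y => if y < x then f y else g y) (g' x) (Iic x) x := by
      refine hfg' ▸ (hf x).hasDerivWithinAt.congr (fun y hy => ?_) (by simp [hfg])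
      rcases (mem_Iic.1 hy).lt_or_eq with hy | rfl
      · simp [hy]
      · simp [hfg]
    have hright : HasDerivWithinAt (fun y => if y < x then f y else g y) (g' x) (Ici x) x :=
      (hg x).hasDerivWithinAt.congr (fun y hy => if_neg (not_lt.2 hy)) (if_neg (lt_irrefl x))
    simpa only [Iic_union_Ici, hasDerivWithinAt_univ] using hleft.union hright
  · rw [if_neg hx.not_gt]
    refine (hg x).congr_of_eventuallyEq ?_
    filter_upwards [Ioi_mem_nhds hx] with y hy using if_neg hy.not_gt

theorem continuous_ite_lt {X Y : Type*} [TopologicalSpace X] [LinearOrder X]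
    [OrderClosedTopology X] [TopologicalSpace Y] {f g : X → Y} {a : X} (hf : Continuous f)
    (hg : Continuous g) (hfg : f a = g a) :
    Continuous fun x => if x < a then f x else g x := by
  have h := Continuous.if_le (f := fun _ : X => a) (g := id) hg hf continuous_const continuous_id
    (by rintro x rfl; exact hfg.symm)
  simpa only [id, ← not_lt, ite_not] using h

theorem monotone_ite_lt {X Y : Type*} [LinearOrder X] [Preorder Y] {f g : X → Y} {a : X}
    (hf : Monotone f) (hg : Monotone g) (hfg : f a ≤ g a) :
    Monotone fun x => if x < a then f x else g x := by
  intro x y hxy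
  dsimp only
  split_ifs with hx hy hy
  · exact hf hxy
  · exact (hf hx.le).trans (hfg.trans (hg (not_lt.1 hy)))
  · exact absurd (hxy.trans_lt hy) hx
  · exact hg hxy

theorem convexOn_univ_of_hasDerivAt {f f' : ℝ → ℝ} (hf : ∀ x, HasDerivAt f (f' x) x)
    (hf' : Monotone f') : ConvexOn ℝ univ f := by
  have hderiv : deriv f = f' := funext fun x => (hf x).deriv
  exact Monotone.convexOn_univ_of_deriv (fun x => (hf x).differentiableAt) (hderiv ▸ hf')

theorem hasDerivAt_mul_sq_div (c k x : ℝ) :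
    HasDerivAt (fun δ => c * δ ^ 2 / (2 * k)) (c / k * x) x := by
  refine (((hasDerivAt_pow 2 x).const_mul c).div_const (2 * k)).congr_deriv ?_
  field_simp
  ring

section SoftPinball

variable {α κ : ℝ}

theorem hasDerivAt_softPinball_left (hκ : κ ≠ 0) (x : ℝ) :
    HasDerivAt (fun δ => (1 - α) * κ / 2 * ((δ + κ) ^ 2 - 2 * δ / κ - 1))
      ((1 - α) * (κ * x + κ ^ 2 - 1)) x := by
  have h := (((((hasDerivAt_id' x).add_const κ).pow 2).sub
    (((hasDerivAt_id' x).const_mul 2).div_const κ)).sub_const 1).const_mul ((1 - α) * κ / 2)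
  refine h.congr_deriv ?_
  field_simp
  ring

theorem hasDerivAt_softPinball_right (hκ : κ ≠ 0) (x : ℝ) :
    HasDerivAt (fun δ => α * κ / 2 * ((δ - κ) ^ 2 + 2 * δ / κ - 1))
      (α * (κ * x - κ ^ 2 + 1)) x := by
  have h := (((((hasDerivAt_id' x).sub_const κ).pow 2).add
    (((hasDerivAt_id' x).const_mul 2).div_const κ)).sub_const 1).const_mul (α * κ / 2)
  refine h.congr_deriv ?_
  field_simp
  ring

theorem hasDerivAt_softPinball (hκ : 0 < κ) (δ : ℝ) :
    HasDerivAt (softPinball α κ) (softPinballDeriv α κ δ) δ := by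
  refine hasDerivAt_ite_lt (hasDerivAt_softPinball_left hκ.ne')
    (hasDerivAt_ite_lt (hasDerivAt_mul_sq_div _ _)
      (hasDerivAt_ite_lt (hasDerivAt_mul_sq_div _ _) (hasDerivAt_softPinball_right hκ.ne') ?_ ?_)
      ?_ ?_) ?_ ?_ δ
  -- the side goals: values and slopes of adjacent pieces agree at `κ`, `0` and `-κ`
  all_goals simp [hκ, hκ.ne']
  all_goals field_simp
  all_goals ring

theorem continuous_softPinballDeriv (hκ : 0 < κ) : Continuous (softPinballDeriv α κ) := by
  refine continuous_ite_lt (by fun_prop)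
    (continuous_ite_lt (by fun_prop) (continuous_ite_lt (by fun_prop) (by fun_prop) ?_) ?_) ?_
  · field_simp
    ring
  · simp [hκ]
  · simp [hκ]
    field_simp
    ring

theorem monotone_softPinballDeriv (hα : α ∈ Icc 0 1) (hκ : 0 < κ) :
    Monotone (softPinballDeriv α κ) := by
  obtain ⟨hα0, hα1⟩ := hα
  have hα1' : 0 ≤ 1 - α := sub_nonneg.2 hα1
  refine monotone_ite_lt (fun x y hxy => by gcongr)
    (monotone_ite_lt (monotone_mul_left_of_nonneg (div_nonneg hα1' hκ.le))
      (monotone_ite_lt (monotone_mul_left_of_nonneg (div_nonneg hα0 hκ.le))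
        (fun x y hxy => by gcongr) ?_) ?_) ?_
  · exact le_of_eq (by field_simp; ring)
  · simp [hκ]
  · exact le_of_eq (by simp [hκ]; field_simp; ring)

end SoftPinball

/-- The soft pinball loss `l_α^κ` is continuously differentiable
on `ℝ` with derivative `∂l_α^κ`, and is convex. -/
theorem softPinball_C1_and_convex
    (α κ : ℝ) (hα : α ∈ Set.Ioo (0:ℝ) 1) (hκ : κ ∈ Set.Ioc (0:ℝ) 1) :
    (∀ δ : ℝ, HasDerivAt (softPinball α κ) (softPinballDeriv α κ δ) δ) ∧
    Continuous (softPinballDeriv α κ) ∧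
    ConvexOn ℝ Set.univ (softPinball α κ) :=
  ⟨hasDerivAt_softPinball hκ.1, continuous_softPinballDeriv hκ.1,
    convexOn_univ_of_hasDerivAt (hasDerivAt_softPinball hκ.1)
      (monotone_softPinballDeriv (Ioo_subset_Icc_self hα) hκ.1)⟩
end

section
/- The Bellman operator (B q)(s,α,a) := VaR_α[ r(s,a) + γ · max_{a'} q(s', U, a') ], where (r, s') is the random reward-next-state pair from (s,a), U is an independent Uniform[0,1] variable, and γ ∈ (0,1), is a γ-contraction in the sup-norm on bounded functions q : S × [0,1] × A → ℝ, for a finite state space S and finite action space A. -/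
open MeasureTheory Set

/-- The nested VaR Bellman optimality operator:
`(B q)(s,α,a) := VaR_α[ r(s,a) + γ · max_{a'} q(s̃', ũ, a') ]`, where the pair
`(r, s̃')` is drawn from the reward–next-state kernel `P s a` and `ũ` is an
independent `Uniform[0,1]` random variable. -/
noncomputable def bellmanB {S A : Type*} [MeasurableSpace S] [Fintype A] [Nonempty A]
    (P : S → A → Measure (ℝ × S)) (γ : ℝ)
    (q : S → ℝ → A → ℝ) (s : S) (α : ℝ) (a : A) : ℝ :=
  sInf {x : ℝ | α ≤ (((P s a).prod (volume.restrict (Set.Icc (0:ℝ) 1)))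
      {p : (ℝ × S) × ℝ | p.1.1 + γ * (⨆ a' : A, q p.1.2 p.2 a') ≤ x}).toReal}

lemma var_sInf_le {Ω : Type*} [MeasurableSpace Ω] (μ : Measure Ω) [IsProbabilityMeasure μ]
    (X Y : Ω → ℝ) (c : ℝ) (hle : ∀ᵐ ω ∂μ, X ω ≤ Y ω + c)
    (mY : ℝ) (hmY : ∀ᵐ ω ∂μ, Y ω ≤ mY)
    (mX : ℝ) (hmX : ∀ᵐ ω ∂μ, mX ≤ X ω)
    {α : ℝ} (hα0 : 0 < α) (hα1 : α ≤ 1) :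
    sInf {x : ℝ | α ≤ (μ {ω | X ω ≤ x}).toReal} ≤
      sInf {x : ℝ | α ≤ (μ {ω | Y ω ≤ x}).toReal} + c := by
  have hne : {x : ℝ | α ≤ (μ {ω | Y ω ≤ x}).toReal}.Nonempty := by
    refine ⟨mY, ?_⟩
    have h1 : μ {ω | Y ω ≤ mY} = 1 := by
      refine le_antisymm prob_le_one ?_
      have : μ Set.univ ≤ μ {ω | Y ω ≤ mY} :=
        measure_mono_ae (hmY.mono fun ω h _ => h)
      simpa using this
    simp [h1, hα1]
  have hbdd : BddBelow {x : ℝ | α ≤ (μ {ω | X ω ≤ x}).toReal} := by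
    refine ⟨mX, fun x hx => ?_⟩
    by_contra h
    push_neg at h
    have h0 : μ {ω | X ω ≤ x} ≤ μ (∅ : Set Ω) := by
      refine measure_mono_ae (hmX.mono fun ω hω hXx => ?_)
      exact absurd (lt_of_le_of_lt (hω.trans hXx) h) (lt_irrefl _)
    simp only [measure_empty, le_zero_iff] at h0
    rw [Set.mem_setOf_eq, h0] at hx
    simp at hx
    linarith
  rw [← sub_le_iff_le_add]
  refine le_csInf hne fun b hb => ?_
  rw [sub_le_iff_le_add]
  refine csInf_le hbdd ?_
  have hsub : μ {ω | Y ω ≤ b} ≤ μ {ω | X ω ≤ b + c} := by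
    refine measure_mono_ae (hle.mono fun ω h hYb => ?_)
    have : Y ω ≤ b := hYb
    exact h.trans (by linarith)
  refine Set.mem_setOf_eq ▸ le_trans hb ?_
  exact ENNReal.toReal_le_toReal (measure_ne_top _ _) (measure_ne_top _ _) |>.mpr hsub

/-- For a finite state space `S`, finite action space `A`, bounded
random rewards and discount `γ ∈ (0,1)`, the Bellman operator `B` is a
`γ`-contraction in the sup-norm on bounded functions `q : S × [0,1] × A → ℝ`. -/
theorem bellmanB_gamma_contraction
    {S A : Type*} [Fintype S] [Nonempty S] [MeasurableSpace S] [MeasurableSingletonClass S]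
    [Fintype A] [Nonempty A]
    (P : S → A → Measure (ℝ × S)) (hP : ∀ s a, IsProbabilityMeasure (P s a))
    (hr : ∃ M : ℝ, ∀ s a, ∀ᵐ p ∂(P s a), |p.1| ≤ M)
    (γ : ℝ) (hγ : γ ∈ Set.Ioo (0:ℝ) 1)
    (q₁ q₂ : S → ℝ → A → ℝ)
    (hb₁ : ∃ M : ℝ, ∀ s a, ∀ α ∈ Set.Icc (0:ℝ) 1, |q₁ s α a| ≤ M)
    (hb₂ : ∃ M : ℝ, ∀ s a, ∀ α ∈ Set.Icc (0:ℝ) 1, |q₂ s α a| ≤ M) :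
    ∀ C : ℝ, 0 ≤ C →
      (∀ s a, ∀ α ∈ Set.Icc (0:ℝ) 1, |q₁ s α a - q₂ s α a| ≤ C) →
      ∀ s a, ∀ α ∈ Set.Icc (0:ℝ) 1,
        |bellmanB P γ q₁ s α a - bellmanB P γ q₂ s α a| ≤ γ * C := by
  obtain ⟨hγ0, hγ1⟩ := hγ
  obtain ⟨M, hM⟩ := hr
  obtain ⟨M₁, hM₁⟩ := hb₁
  obtain ⟨M₂, hM₂⟩ := hb₂
  intro C hC hqC s a α hα
  haveI := hP s a
  haveI : IsProbabilityMeasure (volume.restrict (Set.Icc (0:ℝ) 1)) := by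
    constructor
    simp [Real.volume_Icc]
  set ν := volume.restrict (Set.Icc (0:ℝ) 1) with hν
  set μ := (P s a).prod ν with hμdef
  haveI : IsProbabilityMeasure μ := by rw [hμdef]; infer_instance
  set X₁ : (ℝ × S) × ℝ → ℝ := fun p => p.1.1 + γ * (⨆ a' : A, q₁ p.1.2 p.2 a') with hX₁
  set X₂ : (ℝ × S) × ℝ → ℝ := fun p => p.1.1 + γ * (⨆ a' : A, q₂ p.1.2 p.2 a') with hX₂
  have hB₁ : bellmanB P γ q₁ s α a = sInf {x : ℝ | α ≤ (μ {p | X₁ p ≤ x}).toReal} := rfl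
  have hB₂ : bellmanB P γ q₂ s α a = sInf {x : ℝ | α ≤ (μ {p | X₂ p ≤ x}).toReal} := rfl
  rcases eq_or_lt_of_le hα.1 with h0 | hαpos
  · -- α = 0 : both sets are univ
    have huniv : ∀ X : (ℝ × S) × ℝ → ℝ,
        {x : ℝ | α ≤ (μ {p | X p ≤ x}).toReal} = Set.univ := by
      intro X
      ext x
      simp [← h0, ENNReal.toReal_nonneg]
    rw [hB₁, hB₂, huniv X₁, huniv X₂]
    simp
    positivity
  · -- α > 0
    -- a.e. the second coordinate lies in Icc 0 1
    have hIcc : ∀ᵐ p ∂μ, p.2 ∈ Set.Icc (0:ℝ) 1 := by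
      rw [MeasureTheory.ae_iff]
      have hset : {p : (ℝ × S) × ℝ | ¬ p.2 ∈ Set.Icc (0:ℝ) 1}
          = (Set.univ : Set (ℝ × S)) ×ˢ (Set.Icc (0:ℝ) 1)ᶜ := by
        ext p; simp
      rw [hset, hμdef, Measure.prod_prod]
      have : ν (Set.Icc (0:ℝ) 1)ᶜ = 0 := by
        rw [hν, Measure.restrict_apply (measurableSet_Icc.compl)]
        simp
      simp [this]
    have hR : ∀ᵐ p ∂μ, |p.1.1| ≤ M := by
      rw [MeasureTheory.ae_iff]
      have hset : {p : (ℝ × S) × ℝ | ¬ |p.1.1| ≤ M}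
          = {q : ℝ × S | ¬ |q.1| ≤ M} ×ˢ (Set.univ : Set ℝ) := by
        ext p; simp
      rw [hset, hμdef, Measure.prod_prod]
      have h0 : (P s a) {q : ℝ × S | ¬ |q.1| ≤ M} = 0 := by
        rw [← MeasureTheory.ae_iff]; exact hM s a
      simp only [measure_univ, mul_one]
      simpa [not_le] using h0
    -- bounds on suprema
    have hsupbd : ∀ (q : S → ℝ → A → ℝ) (Mq : ℝ),
        (∀ s a, ∀ α ∈ Set.Icc (0:ℝ) 1, |q s α a| ≤ Mq) →
        ∀ (s' : S) (u : ℝ), u ∈ Set.Icc (0:ℝ) 1 →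
          |⨆ a' : A, q s' u a'| ≤ Mq := by
      intro q Mq hq s' u hu
      rw [abs_le]
      constructor
      · calc -Mq ≤ q s' u (Classical.arbitrary A) := (abs_le.1 (hq s' _ u hu)).1
          _ ≤ ⨆ a' : A, q s' u a' := le_ciSup (Set.Finite.bddAbove (Set.finite_range _)) _
      · exact ciSup_le fun a' => (abs_le.1 (hq s' a' u hu)).2
    -- a.e. comparisons
    have hle : ∀ᵐ p ∂μ, X₁ p ≤ X₂ p + γ * C := by
      filter_upwards [hIcc] with p hp
      have hsup : (⨆ a' : A, q₁ p.1.2 p.2 a') ≤ (⨆ a' : A, q₂ p.1.2 p.2 a') + C := by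
        refine ciSup_le fun a' => ?_
        have h1 : q₁ p.1.2 p.2 a' ≤ q₂ p.1.2 p.2 a' + C := by
          have := abs_le.1 (hqC p.1.2 a' p.2 hp); linarith
        calc q₁ p.1.2 p.2 a' ≤ q₂ p.1.2 p.2 a' + C := h1
          _ ≤ (⨆ a' : A, q₂ p.1.2 p.2 a') + C := by
              gcongr
              exact le_ciSup (Set.Finite.bddAbove (Set.finite_range _)) _
      simp only [hX₁, hX₂]
      nlinarith
    have hle' : ∀ᵐ p ∂μ, X₂ p ≤ X₁ p + γ * C := by
      filter_upwards [hIcc] with p hp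
      have hsup : (⨆ a' : A, q₂ p.1.2 p.2 a') ≤ (⨆ a' : A, q₁ p.1.2 p.2 a') + C := by
        refine ciSup_le fun a' => ?_
        have h1 : q₂ p.1.2 p.2 a' ≤ q₁ p.1.2 p.2 a' + C := by
          have := abs_le.1 (hqC p.1.2 a' p.2 hp); linarith
        calc q₂ p.1.2 p.2 a' ≤ q₁ p.1.2 p.2 a' + C := h1
          _ ≤ (⨆ a' : A, q₁ p.1.2 p.2 a') + C := by
              gcongr
              exact le_ciSup (Set.Finite.bddAbove (Set.finite_range _)) _
      simp only [hX₁, hX₂]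
      nlinarith
    have hub₁ : ∀ᵐ p ∂μ, X₁ p ≤ M + γ * M₁ := by
      filter_upwards [hIcc, hR] with p hp hRp
      have := abs_le.1 (hsupbd q₁ M₁ hM₁ p.1.2 p.2 hp)
      have := abs_le.1 hRp
      simp only [hX₁]
      nlinarith
    have hub₂ : ∀ᵐ p ∂μ, X₂ p ≤ M + γ * M₂ := by
      filter_upwards [hIcc, hR] with p hp hRp
      have := abs_le.1 (hsupbd q₂ M₂ hM₂ p.1.2 p.2 hp)
      have := abs_le.1 hRp
      simp only [hX₂]
      nlinarith
    have hlb₁ : ∀ᵐ p ∂μ, -(M + γ * M₁) ≤ X₁ p := by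
      filter_upwards [hIcc, hR] with p hp hRp
      have := abs_le.1 (hsupbd q₁ M₁ hM₁ p.1.2 p.2 hp)
      have := abs_le.1 hRp
      simp only [hX₁]
      nlinarith
    have hlb₂ : ∀ᵐ p ∂μ, -(M + γ * M₂) ≤ X₂ p := by
      filter_upwards [hIcc, hR] with p hp hRp
      have := abs_le.1 (hsupbd q₂ M₂ hM₂ p.1.2 p.2 hp)
      have := abs_le.1 hRp
      simp only [hX₂]
      nlinarith
    have key₁ := var_sInf_le μ X₁ X₂ (γ * C) hle _ hub₂ _ hlb₁ hαpos hα.2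
    have key₂ := var_sInf_le μ X₂ X₁ (γ * C) hle' _ hub₁ _ hlb₂ hαpos hα.2
    rw [hB₁, hB₂, abs_le]
    constructor <;> linarith
end
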